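/- arXiv:1812.05974 — 4 statements merged into one kernel-verified Lean document; each statement's English description precedes it below -/
import Mathlib

section
/- If F is a submodular function on subsets of a finite set V with F(∅)=0, then the base polyhedron B(F) = { x ∈ ℝ^V : ∀ S ⊆ V, x(S) ≤ F(S), and x(V) = F(V) } is nonempty. -/
open Finset

theorem base_polyhedron_nonempty
    {V : Type*} [Fintype V] [DecidableEq V] (F : Finset V → ℝ)
    (hsub : ∀ A B : Finset V, F A + F B ≥ F (A ∪ B) + F (A ∩ B))
    (h0 : F ∅ = 0) :
    ∃ x : V → ℝ, (∀ S : Finset V, ∑ ℓ ∈ S, x ℓ ≤ F S) ∧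
      ∑ ℓ, x ℓ = F Finset.univ := by
  classical
  set N := Fintype.card V with hN
  set e : V ≃ Fin N := Fintype.equivFin V with he
  set P : ℕ → Finset V := fun k => univ.filter (fun v => (e v : ℕ) < k) with hP
  have hmem : ∀ (v : V) (k : ℕ), v ∈ P k ↔ (e v : ℕ) < k := by
    intro v k; simp [hP]
  have hP0 : P 0 = ∅ := by
    ext v; simp [hP]
  have hPtop : ∀ k, N ≤ k → P k = univ := by
    intro k hk; ext v; simp [hP]; exact lt_of_lt_of_le (e v).isLt hk
  have hstep : ∀ k (hk : k < N), P (k+1) = insert (e.symm ⟨k, hk⟩) (P k) := by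
    intro k hk
    ext v
    rw [Finset.mem_insert, hmem, hmem]
    constructor
    · intro h
      rcases Nat.lt_succ_iff_lt_or_eq.mp h with h | h
      · exact Or.inr h
      · left
        apply e.injective
        rw [Equiv.apply_symm_apply]
        exact Fin.ext h
    · rintro (rfl | h)
      · simp
      · exact Nat.lt_succ_of_lt h
  have hvnot : ∀ k (hk : k < N), e.symm ⟨k, hk⟩ ∉ P k := by
    intro k hk
    rw [hmem]; simp
  set x : V → ℝ := fun v => F (P ((e v : ℕ) + 1)) - F (P (e v)) with hx
  have hxval : ∀ k (hk : k < N), x (e.symm ⟨k, hk⟩) = F (P (k+1)) - F (P k) := by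
    intro k hk
    simp [hx]
  have key : ∀ (S : Finset V) k (hk : k < N), e.symm ⟨k, hk⟩ ∈ S →
      F (P (k+1)) - F (P k) ≤ F (S ∩ P (k+1)) - F (S ∩ P k) := by
    intro S k hk hv
    have hins : S ∩ P (k+1) = insert (e.symm ⟨k, hk⟩) (S ∩ P k) := by
      rw [hstep k hk]
      ext v
      simp only [Finset.mem_inter, Finset.mem_insert]
      constructor
      · rintro ⟨hvS, rfl | hvP⟩
        · exact Or.inl rfl
        · exact Or.inr ⟨hvS, hvP⟩
      · rintro (rfl | ⟨hvS, hvP⟩)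
        · exact ⟨hv, Or.inl rfl⟩
        · exact ⟨hvS, Or.inr hvP⟩
    have hunion : P k ∪ (S ∩ P (k+1)) = P (k+1) := by
      rw [hins, Finset.union_insert, hstep k hk]
      congr 1
      exact Finset.union_eq_left.mpr (Finset.inter_subset_right)
    have hinter : P k ∩ (S ∩ P (k+1)) = S ∩ P k := by
      rw [hins]
      ext v
      simp only [Finset.mem_inter, Finset.mem_insert]
      constructor
      · rintro ⟨hvP, rfl | ⟨hvS, _⟩⟩
        · exact absurd hvP (hvnot k hk)
        · exact ⟨hvS, hvP⟩
      · rintro ⟨hvS, hvP⟩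
        exact ⟨hvP, Or.inr ⟨hvS, hvP⟩⟩
    have h1 := hsub (P k) (S ∩ P (k+1))
    rw [hunion, hinter] at h1
    linarith
  have main : ∀ (S : Finset V) (k : ℕ), ∑ v ∈ S ∩ P k, x v ≤ F (S ∩ P k) := by
    intro S k
    induction k with
    | zero => rw [hP0, Finset.inter_empty, Finset.sum_empty, h0]
    | succ k ih =>
      by_cases hk : k < N
      · by_cases hv : e.symm ⟨k, hk⟩ ∈ S
        · have hins : S ∩ P (k+1) = insert (e.symm ⟨k, hk⟩) (S ∩ P k) := by
            rw [hstep k hk]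
            ext v
            simp only [Finset.mem_inter, Finset.mem_insert]
            constructor
            · rintro ⟨hvS, rfl | hvP⟩
              · exact Or.inl rfl
              · exact Or.inr ⟨hvS, hvP⟩
            · rintro (rfl | ⟨hvS, hvP⟩)
              · exact ⟨hv, Or.inl rfl⟩
              · exact ⟨hvS, Or.inr hvP⟩
          have hnot : e.symm ⟨k, hk⟩ ∉ S ∩ P k := by
            intro h
            exact hvnot k hk (Finset.mem_inter.mp h).2
          rw [hins, Finset.sum_insert hnot, hxval k hk]
          have := key S k hk hv
          rw [hins] at this
          linarith
        · have heq : S ∩ P (k+1) = S ∩ P k := by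
            rw [hstep k hk]
            ext v
            simp only [Finset.mem_inter, Finset.mem_insert]
            constructor
            · rintro ⟨hvS, rfl | hvP⟩
              · exact absurd hvS hv
              · exact ⟨hvS, hvP⟩
            · rintro ⟨hvS, hvP⟩
              exact ⟨hvS, Or.inr hvP⟩
          rw [heq]; exact ih
      · have heq : P (k+1) = P k := by
          rw [hPtop k (le_of_not_gt hk), hPtop (k+1) (le_trans (le_of_not_gt hk) (Nat.le_succ k))]
        rw [heq]; exact ih
  refine ⟨x, ?_, ?_⟩
  · intro S
    have := main S N
    rwa [hPtop N le_rfl, Finset.inter_univ] at this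
  · have h1 : ∑ v, x v = ∑ k : Fin N, (F (P ((k : ℕ) + 1)) - F (P (k : ℕ))) := by
      rw [← Equiv.sum_comp e (fun k : Fin N => F (P ((k : ℕ) + 1)) - F (P (k : ℕ)))]
    rw [h1, Fin.sum_univ_eq_sum_range (fun k => F (P (k + 1)) - F (P k)),
      Finset.sum_range_sub (fun k => F (P k)), hP0, h0, hPtop N le_rfl, sub_zero]
end

section
/- Let F be submodular on subsets of a finite set V with F(∅)=0, and let j_1,…,j_N be any ordering of V. Then the greedy vector x defined by x_{j_ℓ} = F({j_1,…,j_ℓ}) − F({j_1,…,j_{ℓ-1}}) belongs to the base polyhedron B(F). -/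
theorem greedy_vector_mem_base_polyhedron
    {V : Type*} [Fintype V] [DecidableEq V] (F : Finset V → ℝ)
    (hsub : ∀ A B : Finset V, F A + F B ≥ F (A ∪ B) + F (A ∩ B))
    (h0 : F ∅ = 0)
    (j : Fin (Fintype.card V) ≃ V)
    (x : V → ℝ)
    (hx : ∀ v : V,
      x v = F ((Finset.Iic (j.symm v)).image j) - F ((Finset.Iio (j.symm v)).image j)) :
    (∀ S : Finset V, ∑ ℓ ∈ S, x ℓ ≤ F S) ∧ ∑ ℓ, x ℓ = F Finset.univ := by
  classical
  have hxj : ∀ i : Fin (Fintype.card V), x (j i) =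
      F ((Finset.Iic i).image j) - F ((Finset.Iio i).image j) := by
    intro i
    rw [hx (j i)]
    simp only [Equiv.symm_apply_apply]
  constructor
  · -- inequality
    have key : ∀ T : Finset (Fin (Fintype.card V)), ∑ i ∈ T, x (j i) ≤ F (T.image j) := by
      intro T
      induction T using Finset.strongInduction with
      | _ T ih =>
        rcases T.eq_empty_or_nonempty with rfl | hT
        · simp [h0]
        · set m := T.max' hT with hm
          have hmem : m ∈ T := T.max'_mem hT
          have hsub1 : (T.erase m).image j ⊆ (Finset.Iio m).image j := by
            apply Finset.image_subset_image
            intro a ha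
            rw [Finset.mem_Iio]
            rcases Finset.mem_erase.mp ha with ⟨hne, haT⟩
            exact lt_of_le_of_ne (T.le_max' a haT) hne
          have hunion : T.image j ∪ (Finset.Iio m).image j = (Finset.Iic m).image j := by
            rw [← Finset.image_union]
            congr 1
            ext a
            simp only [Finset.mem_union, Finset.mem_Iio, Finset.mem_Iic]
            constructor
            · rintro (h | h)
              · exact T.le_max' a h
              · exact h.le
            · intro h
              rcases eq_or_lt_of_le h with rfl | h
              · exact Or.inl hmem
              · exact Or.inr h
          have hinter : T.image j ∩ (Finset.Iio m).image j = (T.erase m).image j := by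
            rw [← Finset.image_inter _ _ j.injective]
            congr 1
            ext a
            simp only [Finset.mem_inter, Finset.mem_Iio, Finset.mem_erase]
            constructor
            · rintro ⟨hT', hlt⟩
              exact ⟨hlt.ne, hT'⟩
            · rintro ⟨hne, hT'⟩
              exact ⟨hT', lt_of_le_of_ne (T.le_max' a hT') hne⟩
          have key2 := hsub (T.image j) ((Finset.Iio m).image j)
          rw [hunion, hinter] at key2
          have ih' := ih (T.erase m) (Finset.erase_ssubset hmem)
          have hsum : ∑ i ∈ T, x (j i) = x (j m) + ∑ i ∈ T.erase m, x (j i) :=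
            (Finset.add_sum_erase _ _ hmem).symm
          rw [hsum, hxj m]
          linarith
    intro S
    have h1 := key (S.image j.symm)
    have h2 : (S.image j.symm).image j = S := by
      rw [Finset.image_image]
      simp
    have h3 : ∑ i ∈ S.image j.symm, x (j i) = ∑ v ∈ S, x v := by
      rw [Finset.sum_image (fun a _ b _ h => j.symm.injective h)]
      simp
    rw [h2, h3] at h1
    exact h1
  · -- equality
    set g : ℕ → ℝ := fun k =>
      F ((Finset.univ.filter (fun i : Fin (Fintype.card V) => (i : ℕ) < k)).image j) with hg
    have hgi : ∀ i : Fin (Fintype.card V), x (j i) = g ((i : ℕ) + 1) - g (i : ℕ) := by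
      intro i
      rw [hxj i, hg]
      have e1 : Finset.Iic i =
          Finset.univ.filter (fun a : Fin (Fintype.card V) => (a : ℕ) < (i : ℕ) + 1) := by
        ext a
        simp only [Finset.mem_Iic, Finset.mem_filter, Finset.mem_univ, true_and,
          Nat.lt_succ_iff, Fin.le_def]
      have e2 : Finset.Iio i =
          Finset.univ.filter (fun a : Fin (Fintype.card V) => (a : ℕ) < (i : ℕ)) := by
        ext a
        simp only [Finset.mem_Iio, Finset.mem_filter, Finset.mem_univ, true_and, Fin.lt_def]
      rw [e1, e2]
    have h1 : ∑ v, x v = ∑ i : Fin (Fintype.card V), x (j i) := (Equiv.sum_comp j x).symm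
    have h2 : ∑ i : Fin (Fintype.card V), x (j i) =
        ∑ k ∈ Finset.range (Fintype.card V), (g (k + 1) - g k) := by
      rw [← Fin.sum_univ_eq_sum_range (fun k => g (k + 1) - g k) (Fintype.card V)]
      exact Finset.sum_congr rfl fun i _ => hgi i
    have h3 : ∑ k ∈ Finset.range (Fintype.card V), (g (k + 1) - g k) =
        g (Fintype.card V) - g 0 := Finset.sum_range_sub g (Fintype.card V)
    have hg0 : g 0 = 0 := by
      simp only [hg]
      have : (Finset.univ.filter (fun i : Fin (Fintype.card V) => (i : ℕ) < 0)) = ∅ := by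
        ext a
        simp
      rw [this, Finset.image_empty, h0]
    have hgN : g (Fintype.card V) = F Finset.univ := by
      simp only [hg]
      have : (Finset.univ.filter
          (fun i : Fin (Fintype.card V) => (i : ℕ) < Fintype.card V)) = Finset.univ := by
        ext a
        simp [a.isLt]
      rw [this, Finset.image_univ_of_surjective j.surjective]
    rw [h1, h2, h3, hg0, hgN, sub_zero]
end

section
/- Let F be submodular on subsets of a finite set V with F(∅)=0, let u ∈ ℝ^V, and let j_1,…,j_N be an ordering of V with u_{j_1} ≥ u_{j_2} ≥ … ≥ u_{j_N} ≥ 0. Then the greedy vector x with x_{j_ℓ} = F({j_1,…,j_ℓ}) − F({j_1,…,j_{ℓ-1}}) maximizes u^T x over the base polyhedron B(F). -/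
theorem greedy_vector_maximizes_pricing
    {V : Type*} [Fintype V] [DecidableEq V] (F : Finset V → ℝ)
    (hsub : ∀ A B : Finset V, F A + F B ≥ F (A ∪ B) + F (A ∩ B))
    (h0 : F ∅ = 0)
    (u : V → ℝ)
    (j : Fin (Fintype.card V) ≃ V)
    (hsorted : ∀ k l : Fin (Fintype.card V), k ≤ l → u (j k) ≥ u (j l))
    (hnonneg : ∀ v : V, 0 ≤ u v)
    (x : V → ℝ)
    (hx : ∀ v : V,
      x v = F ((Finset.Iic (j.symm v)).image j) - F ((Finset.Iio (j.symm v)).image j)) :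
    ∀ y : V → ℝ,
      ((∀ S : Finset V, ∑ ℓ ∈ S, y ℓ ≤ F S) ∧ ∑ ℓ, y ℓ = F Finset.univ) →
      ∑ v, u v * y v ≤ ∑ v, u v * x v := by
  classical
  rintro y ⟨hy1, _⟩
  set G : ℕ → ℝ := fun n => if h : n < (Fintype.card V) then u (j ⟨n, h⟩) else 0 with hG
  set A : ℕ → Finset V := fun n => Finset.univ.filter (fun v => ((j.symm v : Fin (Fintype.card V)) : ℕ) < n)
    with hA
  -- basic facts about A
  have hA0 : A 0 = ∅ := by ext v; simp [hA]
  have hAsucc : ∀ n (h : n < (Fintype.card V)), A (n + 1) = insert (j ⟨n, h⟩) (A n) := by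
    intro n h
    ext v
    simp only [hA, Finset.mem_filter, Finset.mem_univ, true_and, Finset.mem_insert]
    constructor
    · intro hv
      rcases Nat.lt_succ_iff_lt_or_eq.mp hv with h' | h'
      · exact Or.inr h'
      · left
        have hv' : j.symm v = ⟨n, h⟩ := Fin.ext h'
        rw [← hv', Equiv.apply_symm_apply]
    · rintro (rfl | h')
      · simp
      · omega
  have hAsucc' : ∀ n, ¬ n < (Fintype.card V) → A (n + 1) = A n := by
    intro n h
    ext v
    simp only [hA, Finset.mem_filter, Finset.mem_univ, true_and]
    have := (j.symm v).isLt
    omega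
  have hnotmem : ∀ n (h : n < (Fintype.card V)), j ⟨n, h⟩ ∉ A n := by
    intro n h hmem
    simp only [hA, Finset.mem_filter, Equiv.symm_apply_apply] at hmem
    exact absurd hmem.2 (lt_irrefl n)
  -- x in terms of A
  have himIic : ∀ k : Fin (Fintype.card V), (Finset.Iic k).image j = A (k.val + 1) := by
    intro k
    ext v
    simp only [Finset.mem_image, Finset.mem_Iic, hA, Finset.mem_filter, Finset.mem_univ,
      true_and]
    constructor
    · rintro ⟨l, hl, rfl⟩
      simp only [Equiv.symm_apply_apply]
      exact Nat.lt_succ_of_le (Fin.le_iff_val_le_val.mp hl)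
    · intro hv
      exact ⟨j.symm v, Fin.le_iff_val_le_val.mpr (Nat.lt_succ_iff.mp hv),
        Equiv.apply_symm_apply _ _⟩
  have himIio : ∀ k : Fin (Fintype.card V), (Finset.Iio k).image j = A k.val := by
    intro k
    ext v
    simp only [Finset.mem_image, Finset.mem_Iio, hA, Finset.mem_filter, Finset.mem_univ,
      true_and]
    constructor
    · rintro ⟨l, hl, rfl⟩
      simpa using Fin.lt_iff_val_lt_val.mp hl
    · intro hv
      exact ⟨j.symm v, Fin.lt_iff_val_lt_val.mpr hv, Equiv.apply_symm_apply _ _⟩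
  have hx' : ∀ k : Fin (Fintype.card V), x (j k) = F (A (k.val + 1)) - F (A k.val) := by
    intro k
    have := hx (j k)
    rwa [Equiv.symm_apply_apply, himIic, himIio] at this
  -- sums over A n
  have hsum : ∀ (z : V → ℝ) (n : ℕ),
      ∑ v ∈ A n, z v = ∑ k ∈ Finset.range n, (if h : k < (Fintype.card V) then z (j ⟨k, h⟩) else 0) := by
    intro z n
    induction n with
    | zero => simp [hA0]
    | succ n ih =>
      rw [Finset.sum_range_succ, ← ih]
      by_cases h : n < (Fintype.card V)
      · rw [hAsucc n h, Finset.sum_insert (hnotmem n h), dif_pos h]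
        ring
      · rw [hAsucc' n h, dif_neg h, add_zero]
  have xs : ∀ n, ∑ v ∈ A n, x v = F (A n) := by
    intro n
    induction n with
    | zero => rw [hA0, Finset.sum_empty, h0]
    | succ n ih =>
      by_cases h : n < (Fintype.card V)
      · rw [hAsucc n h, Finset.sum_insert (hnotmem n h), ih, hx' ⟨n, h⟩, ← hAsucc n h]
        ring
      · rw [hAsucc' n h, ih]
  -- facts about G
  have hGN : ∀ n, (Fintype.card V) ≤ n → G n = 0 := by
    intro n hn
    simp only [hG]
    rw [dif_neg (by omega)]
  have hGmono : ∀ m : ℕ, G (m + 1) ≤ G m := by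
    intro m
    by_cases h1 : m + 1 < (Fintype.card V)
    · have h0' : m < (Fintype.card V) := by omega
      simp only [hG, dif_pos h1, dif_pos h0']
      exact hsorted ⟨m, h0'⟩ ⟨m + 1, h1⟩ (by simp [Fin.le_iff_val_le_val])
    · rw [hGN (m + 1) (by omega)]
      by_cases h0' : m < (Fintype.card V)
      · simp only [hG, dif_pos h0']
        exact hnonneg _
      · rw [hGN m (by omega)]
  have htel : ∀ a b : ℕ, a ≤ b → ∑ m ∈ Finset.Ico a b, (G m - G (m + 1)) = G a - G b := by
    intro a b hab
    induction b with
    | zero =>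
      have : a = 0 := by omega
      subst this; simp
    | succ b ih =>
      rcases Nat.lt_or_ge a (b + 1) with h | h
      · have hab' : a ≤ b := by omega
        rw [Finset.sum_Ico_succ_top hab', ih hab']
        ring
      · have : a = b + 1 := by omega
        subst this; simp
  -- key identity via Abel summation
  have key : ∀ z : V → ℝ, ∑ v, u v * z v =
      ∑ m ∈ Finset.range (Fintype.card V), (G m - G (m + 1)) * ∑ v ∈ A (m + 1), z v := by
    intro z
    have h1 : ∑ v, u v * z v =
        ∑ n ∈ Finset.range (Fintype.card V), G n * (if h : n < (Fintype.card V) then z (j ⟨n, h⟩) else 0) := by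
      rw [← Equiv.sum_comp j (fun v => u v * z v), ← Fin.sum_univ_eq_sum_range]
      apply Finset.sum_congr rfl
      intro k _
      simp [hG, k.isLt]
    rw [h1]
    have h2 : ∀ n ∈ Finset.range (Fintype.card V),
        G n * (if h : n < (Fintype.card V) then z (j ⟨n, h⟩) else 0) =
        ∑ m ∈ Finset.Ico n (Fintype.card V), (G m - G (m + 1)) * (if h : n < (Fintype.card V) then z (j ⟨n, h⟩) else 0) := by
      intro n hn
      rw [← Finset.sum_mul, htel n (Fintype.card V) (Finset.mem_range.mp hn).le, hGN (Fintype.card V) le_rfl, sub_zero]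
    rw [Finset.sum_congr rfl h2]
    rw [Finset.sum_comm' (t := fun n => Finset.Ico n (Fintype.card V)) (t' := Finset.range (Fintype.card V))
      (s' := fun m => Finset.range (m + 1))
      (by intro n m; simp only [Finset.mem_range, Finset.mem_Ico]; omega)]
    apply Finset.sum_congr rfl
    intro m hm
    rw [hsum z (m + 1), Finset.mul_sum]
  rw [key y, key x]
  apply Finset.sum_le_sum
  intro m _
  have hlam : 0 ≤ G m - G (m + 1) := by linarith [hGmono m]
  apply mul_le_mul_of_nonneg_left _ hlam
  rw [xs (m + 1)]
  exact hy1 (A (m + 1))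
end

section
/- Let F be submodular with F(∅)=0 and suppose x ∈ B(F) maximizes ∑_ℓ min{x_ℓ, 0} over B(F). Then the set X = {ℓ ∈ V : x_ℓ < 0} satisfies F(X) ≥ x(X) = ∑_ℓ min{x_ℓ,0}, and if additionally X is tight for x (x(X)=F(X)) then X is a minimizer of F. -/
theorem negative_support_of_maximizer
    {V : Type*} [Fintype V] [DecidableEq V] (F : Finset V → ℝ)
    (hsub : ∀ A B : Finset V, F A + F B ≥ F (A ∪ B) + F (A ∩ B))
    (h0 : F ∅ = 0)
    (x : V → ℝ)
    (hxmem : (∀ S : Finset V, ∑ ℓ ∈ S, x ℓ ≤ F S) ∧ ∑ ℓ, x ℓ = F Finset.univ)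
    (hxmax : ∀ y : V → ℝ,
      ((∀ S : Finset V, ∑ ℓ ∈ S, y ℓ ≤ F S) ∧ ∑ ℓ, y ℓ = F Finset.univ) →
      ∑ ℓ, min (y ℓ) 0 ≤ ∑ ℓ, min (x ℓ) 0)
    (X : Finset V)
    (hX : X = Finset.univ.filter (fun ℓ => x ℓ < 0)) :
    (∑ ℓ ∈ X, x ℓ ≤ F X ∧ ∑ ℓ ∈ X, x ℓ = ∑ ℓ, min (x ℓ) 0) ∧
    (∑ ℓ ∈ X, x ℓ = F X → ∀ Y : Finset V, F X ≤ F Y) := by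
  have heq : ∑ ℓ ∈ X, x ℓ = ∑ ℓ, min (x ℓ) 0 := by
    subst hX
    rw [← Finset.sum_filter_add_sum_filter_not Finset.univ (fun ℓ => x ℓ < 0)
      (fun ℓ => min (x ℓ) 0)]
    have h1 : ∀ ℓ ∈ Finset.univ.filter (fun ℓ => x ℓ < 0), min (x ℓ) 0 = x ℓ := by
      intro ℓ hℓ
      simp only [Finset.mem_filter] at hℓ
      exact min_eq_left hℓ.2.le
    have h2 : ∀ ℓ ∈ Finset.univ.filter (fun ℓ => ¬ x ℓ < 0), min (x ℓ) 0 = 0 := by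
      intro ℓ hℓ
      simp only [Finset.mem_filter, not_lt] at hℓ
      exact min_eq_right hℓ.2
    rw [Finset.sum_congr rfl h1, Finset.sum_congr rfl h2, Finset.sum_const_zero, add_zero]
  refine ⟨⟨hxmem.1 X, heq⟩, ?_⟩
  intro htight Y
  have hweak : ∑ ℓ, min (x ℓ) 0 ≤ F Y := by
    calc ∑ ℓ, min (x ℓ) 0 ≤ ∑ ℓ ∈ Y, min (x ℓ) 0 := by
          rw [← Finset.sum_add_sum_compl Y (fun ℓ => min (x ℓ) 0)]
          have : ∑ ℓ ∈ Yᶜ, min (x ℓ) 0 ≤ 0 :=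
            Finset.sum_nonpos (fun i _ => min_le_right _ _)
          linarith
      _ ≤ ∑ ℓ ∈ Y, x ℓ := Finset.sum_le_sum (fun i _ => min_le_left _ _)
      _ ≤ F Y := hxmem.1 Y
  linarith [heq, htight]
end
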